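/- arXiv:1712.04152 — 6 statements merged into one kernel-verified Lean document; each statement's English description precedes it below -/
import Mathlib

section
/- Fix an integer N ≥ 0 and real numbers x, y, ε. Define real numbers K_n for −1 ≤ n ≤ N by K_{−1} = 0, K_0 = 1, and for 1 ≤ n ≤ N by K_n = (1/n)·( x + y/(N−n+1) + n − 1 − N − 2ε )·K_{n−1} − (x/n)·K_{n−2}. Then (N!)^2 · K_N = P_N^{(N,ε)}(x,y), the value of the constraint polynomial at (x,y). -/
/-!
Both sides are the same tridiagonal determinant (continuant) with diagonal
`d k = k x + y - k (k + 2ε)` and off-diagonal products `e k = k (k - 1) (N - k + 1) x`,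
`1 ≤ k ≤ N`. The recurrence for `P_k` expands it from the bottom row, and after rescaling,
`k! (N! / (N - k)!) K_k` satisfies the expansion from the top row, since
`(N - n + 1) (x + n - 1 - N - 2ε) + y = d (N - n + 1)`.
-/

/-- The constraint polynomials `P_k^{(N,ε)}(x,y)` of the asymmetric quantum Rabi model,
as real-valued functions, defined by the three-term recurrence. -/
def constraintPoly (N : ℕ) (ε x y : ℝ) : ℕ → ℝ
  | 0 => 1
  | 1 => x + y - 1 - 2 * ε
  | k + 2 =>
      (((k : ℝ) + 2) * x + y - ((k : ℝ) + 2) * (((k : ℝ) + 2) + 2 * ε)) *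
          constraintPoly N ε x y (k + 1) -
        ((k : ℝ) + 2) * ((k : ℝ) + 1) * ((N : ℝ) - ((k : ℝ) + 1)) * x *
          constraintPoly N ε x y k

section Continuant

variable {R : Type*} [CommRing R] (d e : ℕ → R)

/-- `continuant d e m i` is the determinant of the `m × m` tridiagonal matrix with diagonal
`d i, …, d (i + m - 1)` whose off-diagonal entries at rows `k - 1, k` multiply to `e k`. -/
def continuant : ℕ → ℕ → R
  | 0, _ => 1
  | 1, i => d i
  | m + 2, i => d i * continuant (m + 1) (i + 1) - e (i + 1) * continuant m (i + 2)

theorem continuant_add_two_eq_last (m i : ℕ) :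
    continuant d e (m + 2) i =
      d (i + m + 1) * continuant d e (m + 1) i - e (i + m + 1) * continuant d e m i := by
  induction m using Nat.strong_induction_on generalizing i with
  | _ m ih =>
    match m with
    | 0 => simp only [continuant]; ring_nf
    | 1 => simp only [continuant]; ring_nf
    | m + 2 =>
      rw [continuant, ih (m + 1) (by omega) (i + 1), ih m (by omega) (i + 2),
        continuant.eq_3 d e i (m + 1), continuant.eq_3 d e i m]
      ring_nf

end Continuant

section Rabi

variable (N : ℕ) (ε x y : ℝ)

def rabiDiag (k : ℕ) : ℝ := k * x + y - k * (k + 2 * ε)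

def rabiOffDiag (k : ℕ) : ℝ := k * (k - 1) * (N - k + 1) * x

theorem constraintPoly_eq_continuant (n : ℕ) :
    constraintPoly N ε x y n = continuant (rabiDiag ε x y) (rabiOffDiag N x) n 1 := by
  induction n using Nat.twoStepInduction with
  | zero => rfl
  | one => simp only [constraintPoly, continuant, rabiDiag]; push_cast; ring
  | more k ih₀ ih₁ =>
    rw [continuant_add_two_eq_last, constraintPoly, ih₀, ih₁, add_comm 1 k]
    simp only [rabiDiag, rabiOffDiag]
    push_cast
    ring

variable {N ε x y} {K : ℤ → ℝ}
  (hrec : ∀ n : ℤ, 1 ≤ n → n ≤ (N : ℤ) →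
    K n = (1 / (n : ℝ)) * (x + y / ((N : ℝ) - (n : ℝ) + 1) + (n : ℝ) - 1 - (N : ℝ) - 2 * ε)
            * K (n - 1)
          - (x / (n : ℝ)) * K (n - 2))
include hrec

theorem succ_mul_K_eq {m j : ℕ} (h : m + 1 + j = N) :
    ((j : ℝ) + 1) * ((m : ℝ) + 1) * K (m + 1 : ℕ) =
      rabiDiag ε x y (j + 1) * K m - ((j : ℝ) + 1) * x * K ((m : ℤ) - 1) := by
  have hn := hrec (m + 1) (by omega) (by omega)
  subst h
  simp only [add_sub_cancel_right, show (m : ℤ) + 1 - 2 = m - 1 by ring] at hn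
  rw [Nat.cast_succ, hn, rabiDiag]
  push_cast
  field_simp
  ring

/-- `j` counts the rows left out at the top: the right side is the continuant of rows
`j + 1, …, N`. -/
theorem factorial_mul_factorial_mul_K_eq_continuant (hK_neg : K (-1) = 0) (hK₀ : K 0 = 1)
    (m j : ℕ) (h : m + j = N) :
    (m.factorial : ℝ) * (m + j).factorial * K m =
      j.factorial * continuant (rabiDiag ε x y) (rabiOffDiag N x) m (j + 1) := by
  induction m using Nat.twoStepInduction generalizing j with
  | zero => simp [continuant, hK₀]
  | one =>
    have hK₁ := succ_mul_K_eq hrec (m := 0) (j := j) (by omega)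
    simp only [Nat.cast_zero, zero_add, mul_one, zero_sub, hK_neg, hK₀, mul_zero,
      sub_zero] at hK₁
    rw [continuant, add_comm 1 j, Nat.factorial_one, Nat.factorial_succ]
    push_cast
    linear_combination (j.factorial : ℝ) * hK₁
  | more m ih₀ ih₁ =>
    have hK := succ_mul_K_eq hrec (m := m + 1) (j := j) (by omega)
    have h₁ := ih₁ (j + 1) (by omega)
    have h₀ := ih₀ (j + 2) (by omega)
    subst h
    rw [show ((m + 1 : ℕ) : ℤ) - 1 = m by push_cast; ring, show m + 1 + 1 = m + 2 from rfl] at hK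
    rw [show m + 1 + (j + 1) = m + 2 + j by ring, Nat.factorial_succ m, Nat.factorial_succ j] at h₁
    rw [show m + (j + 2) = m + 2 + j by ring, show j + 2 + 1 = j + 1 + 2 by ring,
      Nat.factorial_succ (j + 1), Nat.factorial_succ j] at h₀
    rw [continuant, Nat.factorial_succ (m + 1), Nat.factorial_succ m, rabiOffDiag]
    push_cast at hK h₁ h₀ ⊢
    apply mul_left_cancel₀ (show (j : ℝ) + 1 ≠ 0 by positivity)
    linear_combination ((m : ℝ) + 1) * m.factorial * (m + 2 + j).factorial * hK
      + rabiDiag ε x y (j + 1) * h₁ - x * ((m : ℝ) + 1) * ((j : ℝ) + 1) * h₀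

end Rabi

/-- if `K : ℤ → ℝ` satisfies `K (-1) = 0`, `K 0 = 1` and the stated
recurrence for `1 ≤ n ≤ N`, then `(N!)² ⬝ K N = P_N^{(N,ε)}(x,y)`. -/
theorem factorial_sq_mul_K_eq_constraintPoly (N : ℕ) (x y ε : ℝ) (K : ℤ → ℝ)
    (hKneg : K (-1) = 0) (hK0 : K 0 = 1)
    (hrec : ∀ n : ℤ, 1 ≤ n → n ≤ (N : ℤ) →
      K n = (1 / (n : ℝ)) * (x + y / ((N : ℝ) - (n : ℝ) + 1) + (n : ℝ) - 1 - (N : ℝ) - 2 * ε)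
              * K (n - 1)
            - (x / (n : ℝ)) * K (n - 2)) :
    ((N.factorial : ℝ)) ^ 2 * K (N : ℤ) = constraintPoly N ε x y N := by
  have h := factorial_mul_factorial_mul_K_eq_continuant hrec hKneg hK0 N 0 (add_zero N)
  simp only [add_zero, Nat.factorial_zero, Nat.cast_one, one_mul, zero_add] at h
  rw [constraintPoly_eq_continuant, ← h]
  ring
end

section
/- Let N ≥ 0 be an integer and ε ≥ −1/2 a real number. Then P_N^{(N,ε)}(x,y) = det( y·I_N + x·D_N + S_N^{(N,ε)} ), where D_N = diag(1,2,…,N) and S_N^{(N,ε)} is the real symmetric N×N tridiagonal matrix with diagonal entries (S)_{i,i} = −i(2(N−i) + 1 + 2ε) for i = 1,…,N and off-diagonal entries (S)_{i,i+1} = (S)_{i+1,i} = √( i(i+1)(N−i)(N−i+2ε) ) for i = 1,…,N−1. -/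
/-- The real symmetric tridiagonal matrix `S_N^{(N,ε)}` (1-based indices): diagonal entries
`-i(2(N-i)+1+2ε)` and off-diagonal entries `√(i(i+1)(N-i)(N-i+2ε))`. -/
noncomputable def Smat (N : ℕ) (ε : ℝ) : Matrix (Fin N) (Fin N) ℝ :=
  Matrix.of fun i j =>
    if (i : ℕ) = (j : ℕ) then
      -(((i : ℕ) + 1 : ℝ) * (2 * ((N : ℝ) - ((i : ℕ) + 1)) + 1 + 2 * ε))
    else if (j : ℕ) = (i : ℕ) + 1 then
      Real.sqrt (((i : ℕ) + 1 : ℝ) * ((i : ℕ) + 2 : ℝ) * ((N : ℝ) - ((i : ℕ) + 1)) *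
        ((N : ℝ) - ((i : ℕ) + 1) + 2 * ε))
    else if (i : ℕ) = (j : ℕ) + 1 then
      Real.sqrt (((j : ℕ) + 1 : ℝ) * ((j : ℕ) + 2 : ℝ) * ((N : ℝ) - ((j : ℕ) + 1)) *
        ((N : ℝ) - ((j : ℕ) + 1) + 2 * ε))
    else 0


open Matrix Finset

/-- Generic tridiagonal matrix with entries given by `ℕ`-indexed sequences. -/
def tmat (n : ℕ) (d u v : ℕ → ℝ) : Matrix (Fin n) (Fin n) ℝ :=
  Matrix.of fun i j =>
    if (i : ℕ) = (j : ℕ) then d i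
    else if (j : ℕ) = (i : ℕ) + 1 then u i
    else if (i : ℕ) = (j : ℕ) + 1 then v j
    else 0

/-- The continuant: determinant of a tridiagonal matrix via the three-term recurrence. -/
noncomputable def contDet (d p : ℕ → ℝ) : ℕ → ℝ
  | 0 => 1
  | 1 => d 0
  | n + 2 => d (n + 1) * contDet d p (n + 1) - p n * contDet d p n

lemma tmat_eq_zero {n : ℕ} (d u v : ℕ → ℝ) {i j : Fin n} (h1 : (i : ℕ) ≠ (j : ℕ))
    (h2 : (j : ℕ) ≠ (i : ℕ) + 1) (h3 : (i : ℕ) ≠ (j : ℕ) + 1) : tmat n d u v i j = 0 := by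
  simp [tmat, h1, h2, h3]

lemma tmat_diag {n : ℕ} (d u v : ℕ → ℝ) {i j : Fin n} (h : (i : ℕ) = (j : ℕ)) :
    tmat n d u v i j = d i := by simp [tmat, h]

lemma tmat_sup {n : ℕ} (d u v : ℕ → ℝ) {i j : Fin n} (h : (j : ℕ) = (i : ℕ) + 1) :
    tmat n d u v i j = u i := by
  simp only [tmat, Matrix.of_apply]
  rw [if_neg (by omega), if_pos h]

lemma tmat_sub {n : ℕ} (d u v : ℕ → ℝ) {i j : Fin n} (h : (i : ℕ) = (j : ℕ) + 1) :
    tmat n d u v i j = v j := by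
  simp only [tmat, Matrix.of_apply]
  rw [if_neg (by omega), if_neg (by omega), if_pos h]

lemma tmat_congr_entry {m k : ℕ} (d u v : ℕ → ℝ) (i j : Fin m) (i' j' : Fin k)
    (hi : (i : ℕ) = (i' : ℕ)) (hj : (j : ℕ) = (j' : ℕ)) :
    tmat m d u v i j = tmat k d u v i' j' := by
  simp [tmat, hi, hj]

lemma tmat_submatrix (n : ℕ) (d u v : ℕ → ℝ) :
    (tmat (n+1) d u v).submatrix Fin.castSucc Fin.castSucc = tmat n d u v := by
  ext i j
  exact tmat_congr_entry d u v _ _ i j (by simp) (by simp)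

lemma det_tmat_succ_succ (n : ℕ) (d u v : ℕ → ℝ) :
    (tmat (n+2) d u v).det =
      d (n+1) * (tmat (n+1) d u v).det - u n * v n * (tmat n d u v).det := by
  have hval : ∀ j : Fin (n+1),
      (((Fin.castSucc (Fin.last n)).succAbove j : Fin (n+2)) : ℕ)
        = if (j : ℕ) < n then (j : ℕ) else (j : ℕ) + 1 := by
    intro j
    rcases lt_or_ge (Fin.castSucc j) (Fin.castSucc (Fin.last n)) with h | h
    · rw [Fin.succAbove_of_castSucc_lt _ _ h]
      have : (j : ℕ) < n := by simpa [Fin.lt_def] using h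
      simp [this]
    · rw [Fin.succAbove_of_le_castSucc _ _ h]
      have : ¬ (j : ℕ) < n := by
        have := h
        simp only [Fin.le_def, Fin.coe_castSucc, Fin.val_last] at this
        omega
      simp [this]
  have hcol : (((Fin.castSucc (Fin.last n)).succAbove (Fin.last n) : Fin (n+2)) : ℕ) = n + 1 := by
    rw [hval]; simp
  have hcol' : ∀ b : Fin n,
      (((Fin.castSucc (Fin.last n)).succAbove (Fin.castSucc b) : Fin (n+2)) : ℕ) = (b : ℕ) := by
    intro b
    rw [hval]; simp [b.isLt]
  rw [Matrix.det_succ_row (tmat (n+2) d u v) (Fin.last (n+1))]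
  rw [Fin.sum_univ_castSucc, Fin.sum_univ_castSucc]
  have h0 : ∀ j : Fin n,
      (-1 : ℝ) ^ ((Fin.last (n+1) : ℕ) + ((Fin.castSucc (Fin.castSucc j)) : ℕ)) *
        tmat (n+2) d u v (Fin.last (n+1)) (Fin.castSucc (Fin.castSucc j)) *
        ((tmat (n+2) d u v).submatrix (Fin.last (n+1)).succAbove
          (Fin.castSucc (Fin.castSucc j)).succAbove).det = 0 := by
    intro j
    have hj : (j : ℕ) < n := j.isLt
    rw [tmat_eq_zero d u v (by simp; omega) (by simp; omega) (by simp; omega)]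
    ring
  rw [Finset.sum_eq_zero fun j _ => h0 j, zero_add]
  have e1 : tmat (n+2) d u v (Fin.last (n+1)) (Fin.castSucc (Fin.last n)) = v n :=
    tmat_sub d u v (by simp)
  have e2 : tmat (n+2) d u v (Fin.last (n+1)) (Fin.last (n+1)) = d (n+1) :=
    tmat_diag d u v rfl
  have hm2 : ((tmat (n+2) d u v).submatrix (Fin.last (n+1)).succAbove
      (Fin.last (n+1)).succAbove).det = (tmat (n+1) d u v).det := by
    rw [Fin.succAbove_last, tmat_submatrix]
  have hm1 : ((tmat (n+2) d u v).submatrix (Fin.last (n+1)).succAbove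
      (Fin.castSucc (Fin.last n)).succAbove).det = u n * (tmat n d u v).det := by
    rw [Matrix.det_succ_column _ (Fin.last n), Fin.sum_univ_castSucc]
    have z : ∀ i : Fin n,
        (-1 : ℝ) ^ (((Fin.castSucc i : Fin (n+1)) : ℕ) + ((Fin.last n : Fin (n+1)) : ℕ)) *
          ((tmat (n+2) d u v).submatrix (Fin.last (n+1)).succAbove
            (Fin.castSucc (Fin.last n)).succAbove) (Fin.castSucc i) (Fin.last n) *
          ((((tmat (n+2) d u v).submatrix (Fin.last (n+1)).succAbove
            (Fin.castSucc (Fin.last n)).succAbove)).submatrix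
              (Fin.castSucc i).succAbove (Fin.last n).succAbove).det = 0 := by
      intro i
      have hi : (i : ℕ) < n := i.isLt
      have hz : ((tmat (n+2) d u v).submatrix (Fin.last (n+1)).succAbove
          (Fin.castSucc (Fin.last n)).succAbove) (Fin.castSucc i) (Fin.last n) = 0 := by
        rw [Matrix.submatrix_apply, Fin.succAbove_last]
        exact tmat_eq_zero d u v (by rw [hcol]; simp; omega) (by rw [hcol]; simp; omega)
          (by rw [hcol]; simp; omega)
      rw [hz]; ring
    rw [Finset.sum_eq_zero fun i _ => z i, zero_add]
    have ecorner : ((tmat (n+2) d u v).submatrix (Fin.last (n+1)).succAbove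
        (Fin.castSucc (Fin.last n)).succAbove) (Fin.last n) (Fin.last n) = u n := by
      rw [Matrix.submatrix_apply, Fin.succAbove_last]
      have := tmat_sup (n := n+2) d u v (i := Fin.castSucc (Fin.last n))
        (j := (Fin.castSucc (Fin.last n)).succAbove (Fin.last n)) (by rw [hcol]; simp)
      rw [this]
      simp
    have emin : (((tmat (n+2) d u v).submatrix (Fin.last (n+1)).succAbove
        (Fin.castSucc (Fin.last n)).succAbove).submatrix
          (Fin.last n).succAbove (Fin.last n).succAbove) = tmat n d u v := by
      ext a b
      simp only [Matrix.submatrix_apply, Fin.succAbove_last]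
      exact tmat_congr_entry d u v _ _ a b (by simp) (hcol' b)
    rw [ecorner, emin]
    have hsgn : (-1 : ℝ) ^ (((Fin.last n : Fin (n+1)) : ℕ) + ((Fin.last n : Fin (n+1)) : ℕ)) = 1 :=
      Even.neg_one_pow ⟨n, by simp [Fin.val_last]⟩
    rw [hsgn]; ring
  rw [e1, e2, hm1, hm2]
  have hs1 : (-1 : ℝ) ^ (((Fin.last (n+1) : Fin (n+2)) : ℕ) +
      ((Fin.castSucc (Fin.last n) : Fin (n+2)) : ℕ)) = -1 :=
    Odd.neg_one_pow ⟨n, by simp [Fin.val_last, Fin.coe_castSucc]; ring⟩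
  have hs2 : (-1 : ℝ) ^ (((Fin.last (n+1) : Fin (n+2)) : ℕ) +
      ((Fin.last (n+1) : Fin (n+2)) : ℕ)) = 1 :=
    Even.neg_one_pow ⟨n + 1, by simp [Fin.val_last]⟩
  rw [hs1, hs2]; ring
lemma det_tmat (d u v : ℕ → ℝ) : ∀ n : ℕ,
    (tmat n d u v).det = contDet d (fun k => u k * v k) n := by
  have key : ∀ n : ℕ, (tmat n d u v).det = contDet d (fun k => u k * v k) n ∧
      (tmat (n+1) d u v).det = contDet d (fun k => u k * v k) (n+1) := by
    intro n
    induction n with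
    | zero =>
      constructor
      · simp [contDet]
      · rw [show (tmat 1 d u v).det = tmat 1 d u v 0 0 from Matrix.det_fin_one _]
        simp [tmat, contDet]
    | succ n ih =>
      refine ⟨ih.2, ?_⟩
      rw [det_tmat_succ_succ, ih.1, ih.2]
      rfl
  exact fun n => (key n).1

lemma contDet_congr (d d' p p' : ℕ → ℝ) : ∀ n : ℕ, (∀ k, k < n → d k = d' k) →
    (∀ k, k + 1 < n → p k = p' k) → contDet d p n = contDet d' p' n := by
  have key : ∀ n : ℕ,
      ((∀ k, k < n → d k = d' k) → (∀ k, k + 1 < n → p k = p' k) →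
        contDet d p n = contDet d' p' n) ∧
      ((∀ k, k < n + 1 → d k = d' k) → (∀ k, k + 1 < n + 1 → p k = p' k) →
        contDet d p (n+1) = contDet d' p' (n+1)) := by
    intro n
    induction n with
    | zero =>
      refine ⟨fun _ _ => rfl, fun hd _ => ?_⟩
      show d 0 = d' 0
      exact hd 0 (by omega)
    | succ n ih =>
      refine ⟨fun hd hp => ih.2 hd hp, fun hd hp => ?_⟩
      show d (n+1) * contDet d p (n+1) - p n * contDet d p n
          = d' (n+1) * contDet d' p' (n+1) - p' n * contDet d' p' n
      rw [hd (n+1) (by omega), hp n (by omega),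
        ih.1 (fun k hk => hd k (by omega)) (fun k hk => hp k (by omega)),
        ih.2 (fun k hk => hd k (by omega)) (fun k hk => hp k (by omega))]
  exact fun n => (key n).1
lemma sum_ite_val {n : ℕ} (f : Fin n → ℝ) (m : ℕ) :
    (∑ k : Fin n, if (k : ℕ) = m then f k else 0) = if h : m < n then f ⟨m, h⟩ else 0 := by
  split_ifs with h
  · rw [Finset.sum_eq_single_of_mem ⟨m, h⟩ (Finset.mem_univ _)]
    · simp
    · intro b _ hb
      rw [if_neg]
      exact fun hc => hb (Fin.ext hc)
  · exact Finset.sum_eq_zero fun k _ => if_neg (by have := k.isLt; omega)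

lemma mul_tmat_apply {n : ℕ} (G : Matrix (Fin n) (Fin n) ℝ) (d u v : ℕ → ℝ) (i j : Fin n) :
    (G * tmat n d u v) i j =
      G i j * d (j : ℕ)
      + (if 1 ≤ (j : ℕ) then G i ⟨(j : ℕ) - 1, by omega⟩ * u ((j : ℕ) - 1) else 0)
      + (if h : (j : ℕ) + 1 < n then G i ⟨(j : ℕ) + 1, h⟩ * v (j : ℕ) else 0) := by
  rw [Matrix.mul_apply]
  have expand : ∀ k : Fin n, G i k * tmat n d u v k j =
      (if (k : ℕ) = (j : ℕ) then G i k * d (k : ℕ) else 0)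
      + (if (k : ℕ) = (j : ℕ) - 1 then (if 1 ≤ (j : ℕ) then G i k * u (k : ℕ) else 0) else 0)
      + (if (k : ℕ) = (j : ℕ) + 1 then G i k * v (j : ℕ) else 0) := by
    intro k
    simp only [tmat, Matrix.of_apply]
    split_ifs <;> first | ring1 | (exfalso; omega)
  rw [Finset.sum_congr rfl fun k _ => expand k]
  rw [Finset.sum_add_distrib, Finset.sum_add_distrib, sum_ite_val, sum_ite_val, sum_ite_val]
  have hj := j.isLt
  rw [dif_pos hj, dif_pos (show (j : ℕ) - 1 < n by omega)]

lemma tmat_mul_apply {n : ℕ} (G : Matrix (Fin n) (Fin n) ℝ) (d u v : ℕ → ℝ) (i j : Fin n) :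
    (tmat n d u v * G) i j =
      d (i : ℕ) * G i j
      + (if h : (i : ℕ) + 1 < n then u (i : ℕ) * G ⟨(i : ℕ) + 1, h⟩ j else 0)
      + (if 1 ≤ (i : ℕ) then v ((i : ℕ) - 1) * G ⟨(i : ℕ) - 1, by omega⟩ j else 0) := by
  rw [Matrix.mul_apply]
  have expand : ∀ k : Fin n, tmat n d u v i k * G k j =
      (if (k : ℕ) = (i : ℕ) then d (i : ℕ) * G k j else 0)
      + (if (k : ℕ) = (i : ℕ) + 1 then u (i : ℕ) * G k j else 0)
      + (if (k : ℕ) = (i : ℕ) - 1 then (if 1 ≤ (i : ℕ) then v (k : ℕ) * G k j else 0)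
          else 0) := by
    intro k
    simp only [tmat, Matrix.of_apply]
    split_ifs <;> first | ring1 | (exfalso; omega)
  rw [Finset.sum_congr rfl fun k _ => expand k]
  rw [Finset.sum_add_distrib, Finset.sum_add_distrib, sum_ite_val, sum_ite_val, sum_ite_val]
  have hi := i.isLt
  rw [dif_pos hi, dif_pos (show (i : ℕ) - 1 < n by omega)]
/-- Lower-triangular matrix of descending factorials implementing the conjugation. -/
noncomputable def Gmat (N : ℕ) : Matrix (Fin N) (Fin N) ℝ :=
  Matrix.of fun i j => ((i : ℕ).descFactorial (j : ℕ) : ℝ)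

def dAf (ε x y : ℝ) : ℕ → ℝ := fun k => ((k:ℝ)+1)*x + y - ((k:ℝ)+1)*(((k:ℝ)+1)+2*ε)
def gf (N : ℕ) : ℕ → ℝ := fun k => ((k:ℝ)+1)*((k:ℝ)+2)*((N:ℝ)-((k:ℝ)+1))
def dSf (N : ℕ) (ε x y : ℝ) : ℕ → ℝ :=
  fun k => y + ((k:ℝ)+1)*x - ((k:ℝ)+1)*(2*((N:ℝ)-((k:ℝ)+1))+1+2*ε)
def upf (N : ℕ) : ℕ → ℝ := fun k => ((k:ℝ)+2)*((N:ℝ)-((k:ℝ)+1))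
def vpf (N : ℕ) (ε : ℝ) : ℕ → ℝ := fun k => ((k:ℝ)+1)*((N:ℝ)-((k:ℝ)+1)+2*ε)

lemma desc_key (a b : ℕ) :
    (a + 1 - b) * Nat.descFactorial (a+1) b = (a+1) * Nat.descFactorial a b := by
  cases b with
  | zero => simp
  | succ c =>
    rw [Nat.succ_descFactorial_succ, Nat.descFactorial_succ,
      show a + 1 - (c + 1) = a - c by omega]
    ring

lemma conj_entry (N : ℕ) (ε x y : ℝ) (ni nj : ℕ) (hiN : ni < N) (hjN : nj < N) :
    (ni.descFactorial nj : ℝ) * dAf ε x y nj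
      + (if 1 ≤ nj then (ni.descFactorial (nj - 1) : ℝ) * gf N (nj - 1) else 0)
      + (ni.descFactorial (nj+1) : ℝ) * x
      = dSf N ε x y ni * (ni.descFactorial nj : ℝ)
      + upf N ni * ((ni+1).descFactorial nj : ℝ)
      + (if 1 ≤ ni then vpf N ε (ni - 1) * ((ni - 1).descFactorial nj : ℝ) else 0) := by
  classical
  by_cases hj0 : nj = 0
  · subst hj0
    rw [if_neg (by omega)]
    norm_num [Nat.descFactorial_zero, Nat.descFactorial_one]
    by_cases hi0 : ni = 0
    · subst hi0
      rw [if_neg (by omega)]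
      norm_num [Nat.descFactorial_zero, Nat.descFactorial_one]
      simp only [dAf, dSf, upf]
      push_cast
      ring
    · rw [if_pos (by omega)]
      have hvp : vpf N ε (ni - 1) = (ni:ℝ)*((N:ℝ)-(ni:ℝ)+2*ε) := by
        simp only [vpf]
        rw [Nat.cast_pred (by omega)]
        ring
      rw [hvp]
      simp only [dAf, dSf, upf]
      push_cast
      ring
  · by_cases hle : nj ≤ ni
    · -- generic case : 1 ≤ nj ≤ ni
      have hj1 : 1 ≤ nj := by omega
      have hi1 : 1 ≤ ni := by omega
      rw [if_pos hj1, if_pos hi1]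
      have hgam : gf N (nj - 1) = (nj:ℝ)*((nj:ℝ)+1)*((N:ℝ)-(nj:ℝ)) := by
        simp only [gf]
        rw [Nat.cast_pred (by omega)]
        ring
      have hvp : vpf N ε (ni - 1) = (ni:ℝ)*((N:ℝ)-(ni:ℝ)+2*ε) := by
        simp only [vpf]
        rw [Nat.cast_pred (by omega)]
        ring
      rw [hgam, hvp]
      have FX : ((ni:ℝ) - (nj:ℝ) + 1) * (ni.descFactorial (nj-1) : ℝ)
          = (ni.descFactorial nj : ℝ) := by
        have hn : ni.descFactorial nj = (ni - (nj - 1)) * ni.descFactorial (nj - 1) := by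
          conv_lhs => rw [show nj = (nj - 1) + 1 by omega]
          rw [Nat.descFactorial_succ]
        rw [hn]
        push_cast [Nat.cast_sub (show nj - 1 ≤ ni by omega),
          Nat.cast_sub (show 1 ≤ nj by omega)]
        ring
      have FW : (ni.descFactorial (nj+1) : ℝ) = ((ni:ℝ) - (nj:ℝ)) * (ni.descFactorial nj : ℝ) := by
        rw [Nat.descFactorial_succ]
        push_cast [Nat.cast_sub hle]
        ring
      have FY : ((ni:ℝ) - (nj:ℝ) + 1) * ((ni+1).descFactorial nj : ℝ)
          = ((ni:ℝ) + 1) * (ni.descFactorial nj : ℝ) := by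
        have := desc_key ni nj
        have hcast := congrArg (fun t : ℕ => (t : ℝ)) this
        push_cast [Nat.cast_sub (show nj ≤ ni + 1 by omega)] at hcast
        calc ((ni:ℝ) - (nj:ℝ) + 1) * ((ni+1).descFactorial nj : ℝ)
            = ((ni:ℝ) + 1 - (nj:ℝ)) * ((ni+1).descFactorial nj : ℝ) := by ring
          _ = ((ni:ℝ) + 1) * (ni.descFactorial nj : ℝ) := hcast
      have FZ : (ni:ℝ) * ((ni-1).descFactorial nj : ℝ)
          = ((ni:ℝ) - (nj:ℝ)) * (ni.descFactorial nj : ℝ) := by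
        have := desc_key (ni - 1) nj
        rw [show ni - 1 + 1 = ni by omega] at this
        have hcast := congrArg (fun t : ℕ => (t : ℝ)) this
        push_cast [Nat.cast_sub hle] at hcast
        linarith [hcast]
      have hc : ((ni:ℝ) * ((ni:ℝ) - (nj:ℝ) + 1)) ≠ 0 := by
        have h1 : (1:ℝ) ≤ (ni:ℝ) := by exact_mod_cast hi1
        have h2 : (nj:ℝ) ≤ (ni:ℝ) := by exact_mod_cast hle
        exact (mul_pos (by linarith) (by linarith)).ne'
      apply mul_left_cancel₀ hc
      simp only [dAf, dSf, upf]
      linear_combination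
        ((ni:ℝ) * ((nj:ℝ)*((nj:ℝ)+1)*((N:ℝ)-(nj:ℝ)))) * FX
        + ((ni:ℝ) * ((ni:ℝ)-(nj:ℝ)+1) * x) * FW
        - ((ni:ℝ) * (((ni:ℝ)+2)*((N:ℝ)-((ni:ℝ)+1)))) * FY
        - (((ni:ℝ)-(nj:ℝ)+1) * ((ni:ℝ)*((N:ℝ)-(ni:ℝ)+2*ε))) * FZ
    · -- nj > ni
      by_cases hsup : nj = ni + 1
      · subst hsup
        rw [if_pos (by omega)]
        simp only [Nat.add_sub_cancel]
        rw [Nat.descFactorial_eq_zero_iff_lt.mpr (by omega),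
          Nat.descFactorial_eq_zero_iff_lt.mpr (show ni < ni + 1 + 1 by omega),
          Nat.descFactorial_self, Nat.descFactorial_self]
        have hv : (if 1 ≤ ni then vpf N ε (ni - 1) * ((ni - 1).descFactorial (ni+1) : ℝ) else 0)
            = 0 := by
          split_ifs with h
          · rw [Nat.descFactorial_eq_zero_iff_lt.mpr (by omega)]
            simp
          · rfl
        rw [hv]
        simp only [gf, upf, Nat.cast_zero, Nat.factorial_succ]
        push_cast
        ring
      · -- nj ≥ ni + 2 : everything vanishes
        have h2 : ni + 2 ≤ nj := by omega
        rw [Nat.descFactorial_eq_zero_iff_lt.mpr (by omega),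
          Nat.descFactorial_eq_zero_iff_lt.mpr (show ni < nj + 1 by omega),
          Nat.descFactorial_eq_zero_iff_lt.mpr (show ni + 1 < nj by omega)]
        have hx : (if 1 ≤ nj then (ni.descFactorial (nj - 1) : ℝ) * gf N (nj - 1) else 0) = 0 := by
          rw [if_pos (by omega), Nat.descFactorial_eq_zero_iff_lt.mpr (by omega)]
          simp
        have hv : (if 1 ≤ ni then vpf N ε (ni - 1) * ((ni - 1).descFactorial nj : ℝ) else 0)
            = 0 := by
          split_ifs with h
          · rw [Nat.descFactorial_eq_zero_iff_lt.mpr (by omega)]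
            simp
          · rfl
        rw [hx, hv]
        simp

lemma conj (N : ℕ) (ε x y : ℝ) :
    Gmat N * tmat N (dAf ε x y) (gf N) (fun _ => x)
      = tmat N (dSf N ε x y) (upf N) (vpf N ε) * Gmat N := by
  ext i j
  rw [mul_tmat_apply, tmat_mul_apply]
  have hW : (if h : (j:ℕ) + 1 < N then Gmat N i ⟨(j:ℕ)+1, h⟩ * x else 0)
      = ((i:ℕ).descFactorial ((j:ℕ)+1) : ℝ) * x := by
    split_ifs with h
    · rfl
    · rw [Nat.descFactorial_eq_zero_iff_lt.mpr (by have := i.isLt; omega)]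
      simp
  have hU : (if h : (i:ℕ) + 1 < N then upf N (i:ℕ) * Gmat N ⟨(i:ℕ)+1, h⟩ j else 0)
      = upf N (i:ℕ) * (((i:ℕ)+1).descFactorial (j:ℕ) : ℝ) := by
    split_ifs with h
    · rfl
    · have hNi : N = (i:ℕ) + 1 := by have := i.isLt; omega
      have hz : upf N (i:ℕ) = 0 := by
        simp only [upf, hNi]
        push_cast
        ring
      rw [hz, zero_mul]
  rw [hW, hU]
  exact conj_entry N ε x y (i:ℕ) (j:ℕ) i.isLt j.isLt

lemma cp_eq_contDet (N : ℕ) (ε x y : ℝ) : ∀ n : ℕ,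
    constraintPoly N ε x y n = contDet (dAf ε x y) (fun k => gf N k * x) n := by
  have key : ∀ n : ℕ,
      constraintPoly N ε x y n = contDet (dAf ε x y) (fun k => gf N k * x) n ∧
      constraintPoly N ε x y (n+1) = contDet (dAf ε x y) (fun k => gf N k * x) (n+1) := by
    intro n
    induction n with
    | zero =>
      refine ⟨rfl, ?_⟩
      show x + y - 1 - 2 * ε = dAf ε x y 0
      simp only [dAf]
      push_cast
      ring
    | succ n ih =>
      refine ⟨ih.2, ?_⟩
      show (((n : ℝ) + 2) * x + y - ((n : ℝ) + 2) * (((n : ℝ) + 2) + 2 * ε)) *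
            constraintPoly N ε x y (n + 1) -
          ((n : ℝ) + 2) * ((n : ℝ) + 1) * ((N : ℝ) - ((n : ℝ) + 1)) * x *
            constraintPoly N ε x y n
        = dAf ε x y (n+1) * contDet (dAf ε x y) (fun k => gf N k * x) (n+1)
          - gf N n * x * contDet (dAf ε x y) (fun k => gf N k * x) n
      rw [ih.1, ih.2]
      simp only [dAf, gf]
      push_cast
      ring
  exact fun n => (key n).1

lemma detGmat_ne_zero (N : ℕ) : (Gmat N).det ≠ 0 := by
  have hBT : (Gmat N).BlockTriangular OrderDual.toDual := by
    intro a b hab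
    have hlt : a < b := OrderDual.toDual_lt_toDual.mp hab
    have : (a : ℕ) < (b : ℕ) := hlt
    simp [Gmat, Nat.descFactorial_eq_zero_iff_lt.mpr this]
  rw [Matrix.det_of_lowerTriangular _ hBT]
  apply Finset.prod_ne_zero_iff.mpr
  intro a _
  show ((a : ℕ).descFactorial (a : ℕ) : ℝ) ≠ 0
  rw [Nat.descFactorial_self]
  exact_mod_cast (Nat.factorial_pos _).ne'

/-- for `ε ≥ -1/2`,
`P_N^{(N,ε)}(x,y) = det(y I_N + x D_N + S_N^{(N,ε)})` with `D_N = diag(1,…,N)`. -/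
theorem constraintPoly_eq_det_symm (N : ℕ) (ε : ℝ) (hε : (-1 : ℝ) / 2 ≤ ε) (x y : ℝ) :
    constraintPoly N ε x y N =
      (y • (1 : Matrix (Fin N) (Fin N) ℝ) +
        x • Matrix.diagonal (fun i : Fin N => ((i : ℕ) + 1 : ℝ)) + Smat N ε).det := by
  classical
  have hM : y • (1 : Matrix (Fin N) (Fin N) ℝ) +
      x • Matrix.diagonal (fun i : Fin N => ((i : ℕ) + 1 : ℝ)) + Smat N ε
      = tmat N (dSf N ε x y)
          (fun k => Real.sqrt (((k:ℝ)+1)*((k:ℝ)+2)*((N:ℝ)-((k:ℝ)+1))*((N:ℝ)-((k:ℝ)+1)+2*ε)))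
          (fun k => Real.sqrt (((k:ℝ)+1)*((k:ℝ)+2)*((N:ℝ)-((k:ℝ)+1))*((N:ℝ)-((k:ℝ)+1)+2*ε)))
      := by
    ext i j
    simp only [Matrix.add_apply, Matrix.smul_apply, Matrix.one_apply, Matrix.diagonal_apply,
      Smat, tmat, Matrix.of_apply, smul_eq_mul]
    by_cases h1 : (i : ℕ) = (j : ℕ)
    · have hij : i = j := Fin.ext h1
      rw [if_pos hij, if_pos hij, if_pos h1, if_pos h1]
      simp only [dSf]
      ring
    · have hij : i ≠ j := fun h => h1 (congrArg Fin.val h)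
      rw [if_neg hij, if_neg hij, if_neg h1, if_neg h1]
      split_ifs with h2 h3
      · ring_nf
      · ring_nf
      · ring
  rw [hM, det_tmat]
  have hstep : contDet (dSf N ε x y)
      (fun k => Real.sqrt (((k:ℝ)+1)*((k:ℝ)+2)*((N:ℝ)-((k:ℝ)+1))*((N:ℝ)-((k:ℝ)+1)+2*ε)) *
        Real.sqrt (((k:ℝ)+1)*((k:ℝ)+2)*((N:ℝ)-((k:ℝ)+1))*((N:ℝ)-((k:ℝ)+1)+2*ε))) N
      = contDet (dSf N ε x y) (fun k => upf N k * vpf N ε k) N := by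
    apply contDet_congr _ _ _ _ N (fun _ _ => rfl)
    intro k hk
    have hk2 : ((k:ℝ) + 2) ≤ (N:ℝ) := by exact_mod_cast (show k + 2 ≤ N by omega)
    have hnn : 0 ≤ ((k:ℝ)+1)*((k:ℝ)+2)*((N:ℝ)-((k:ℝ)+1))*((N:ℝ)-((k:ℝ)+1)+2*ε) := by
      have p1 : (0:ℝ) ≤ (k:ℝ)+1 := by positivity
      have p2 : (0:ℝ) ≤ (k:ℝ)+2 := by positivity
      have p3 : (0:ℝ) ≤ (N:ℝ)-((k:ℝ)+1) := by linarith
      have p4 : (0:ℝ) ≤ (N:ℝ)-((k:ℝ)+1)+2*ε := by linarith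
      exact mul_nonneg (mul_nonneg (mul_nonneg p1 p2) p3) p4
    rw [Real.mul_self_sqrt hnn]
    simp only [upf, vpf]
    ring
  rw [hstep, ← det_tmat]
  have hdetEq : (tmat N (dAf ε x y) (gf N) (fun _ => x)).det
      = (tmat N (dSf N ε x y) (upf N) (vpf N ε)).det := by
    have h := congrArg Matrix.det (conj N ε x y)
    rw [Matrix.det_mul, Matrix.det_mul] at h
    apply mul_left_cancel₀ (detGmat_ne_zero N)
    rw [h]
    ring
  rw [← hdetEq, det_tmat]
  exact cp_eq_contDet N ε x y N
end

section
/- Let ℓ ≥ 1 and 1 ≤ k ≤ ℓ be integers. Then for all real numbers x > 0 and y > 0, the constraint polynomial with negative half-integer parameter satisfies P_k^{(k, −ℓ/2)}(x,y) > 0. -/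
lemma constraintPoly_aux (ℓ k : ℕ) (hkℓ : k ≤ ℓ) (x y : ℝ) (hx : 0 < x) (hy : 0 < y) :
    ∀ j : ℕ, j + 1 ≤ k →
      0 < constraintPoly k (-(ℓ : ℝ) / 2) x y j ∧
      ((j : ℝ) + 1) * ((ℓ : ℝ) - ((j : ℝ) + 1)) * constraintPoly k (-(ℓ : ℝ) / 2) x y j <
        constraintPoly k (-(ℓ : ℝ) / 2) x y (j + 1) := by
  intro j
  induction j with
  | zero =>
    intro h
    have hL : (1 : ℝ) ≤ (ℓ : ℝ) := by exact_mod_cast le_trans h hkℓ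
    constructor
    · simp [constraintPoly]
    · simp only [constraintPoly]
      push_cast
      nlinarith [hx, hy, hL]
  | succ n ih =>
    intro h
    obtain ⟨h1, h2⟩ := ih (by omega)
    have hK : ((n : ℝ) + 1) + 1 ≤ (k : ℝ) := by exact_mod_cast h
    have hL : (k : ℝ) ≤ (ℓ : ℝ) := by exact_mod_cast hkℓ
    have hnL : ((n : ℝ) + 1) ≤ (ℓ : ℝ) := by linarith
    have hp1 : 0 < constraintPoly k (-(ℓ : ℝ) / 2) x y (n + 1) := by
      have : 0 ≤ ((n : ℝ) + 1) * ((ℓ : ℝ) - ((n : ℝ) + 1)) *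
          constraintPoly k (-(ℓ : ℝ) / 2) x y n := by
        apply mul_nonneg (mul_nonneg (by positivity) (by linarith)) h1.le
      linarith
    refine ⟨hp1, ?_⟩
    have key : ((n : ℝ) + 2) * ((n : ℝ) + 1) * ((k : ℝ) - ((n : ℝ) + 1)) * x *
        constraintPoly k (-(ℓ : ℝ) / 2) x y n <
        (((n : ℝ) + 2) * x + y) * constraintPoly k (-(ℓ : ℝ) / 2) x y (n + 1) := by
      have hpos : 0 < ((n : ℝ) + 2) * x + y := by positivity
      have step1 : (((n : ℝ) + 2) * x + y) *
          (((n : ℝ) + 1) * ((ℓ : ℝ) - ((n : ℝ) + 1)) * constraintPoly k (-(ℓ : ℝ) / 2) x y n) <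
          (((n : ℝ) + 2) * x + y) * constraintPoly k (-(ℓ : ℝ) / 2) x y (n + 1) :=
        mul_lt_mul_of_pos_left h2 hpos
      have t1 : 0 ≤ ((n : ℝ) + 1) * constraintPoly k (-(ℓ : ℝ) / 2) x y n *
          (((n : ℝ) + 2) * x * ((ℓ : ℝ) - (k : ℝ))) := by
        apply mul_nonneg (mul_nonneg (by positivity) h1.le)
        apply mul_nonneg (by positivity) (by linarith)
      have t2 : 0 ≤ ((n : ℝ) + 1) * constraintPoly k (-(ℓ : ℝ) / 2) x y n *
          (y * ((ℓ : ℝ) - ((n : ℝ) + 1))) := by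
        apply mul_nonneg (mul_nonneg (by positivity) h1.le)
        apply mul_nonneg hy.le (by linarith)
      nlinarith [step1, t1, t2]
    show _ < constraintPoly k (-(ℓ : ℝ) / 2) x y (n + 2)
    rw [constraintPoly]
    push_cast
    nlinarith [key, hp1]

/-- for integers `1 ≤ k ≤ ℓ` and reals `x, y > 0`, one has
`P_k^{(k,-ℓ/2)}(x,y) > 0`. -/
theorem constraintPoly_neg_halfinteger_pos (ℓ k : ℕ) (hℓ : 1 ≤ ℓ) (hk : 1 ≤ k) (hkℓ : k ≤ ℓ)
    (x y : ℝ) (hx : 0 < x) (hy : 0 < y) :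
    0 < constraintPoly k (-(ℓ : ℝ) / 2) x y k := by
  obtain ⟨m, rfl⟩ : ∃ m, k = m + 1 := ⟨k - 1, by omega⟩
  obtain ⟨h1, h2⟩ := constraintPoly_aux ℓ (m + 1) hkℓ x y hx hy m le_rfl
  have hL : ((m : ℝ) + 1) ≤ (ℓ : ℝ) := by exact_mod_cast hkℓ
  have : 0 ≤ ((m : ℝ) + 1) * ((ℓ : ℝ) - ((m : ℝ) + 1)) *
      constraintPoly (m + 1) (-(ℓ : ℝ) / 2) x y m :=
    mul_nonneg (mul_nonneg (by positivity) (by linarith)) h1.le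
  linarith
end

section
/- For all integers N ≥ 0 and ℓ ≥ 0, all real ε, and all real y: (a) P_N^{(N,ε)}(0, y) = ∏_{i=1}^N ( y − i(i + 2ε) ); and (b) A_N^ℓ(0, y) = ∏_{i=1}^ℓ ( y − i(i − ℓ) ) = ∏_{i=1}^ℓ ( y + i(ℓ − i) ). -/
/-- The tridiagonal matrix `M_ℓ^{(N)}(x)` over `ℝ` (1-based indices): diagonal entries
`(N+i)(x-ℓ+2i-1)`, superdiagonal entries `N+i`, subdiagonal entries
`(M)_{i+1,i} = -(N+i+1)·i·(ℓ-i)`. -/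
def Mmat (N ℓ : ℕ) (x : ℝ) : Matrix (Fin ℓ) (Fin ℓ) ℝ :=
  Matrix.of fun i j =>
    if (i : ℕ) = (j : ℕ) then
      ((N : ℝ) + (i : ℕ) + 1) * (x - (ℓ : ℝ) + 2 * ((i : ℕ) + 1) - 1)
    else if (j : ℕ) = (i : ℕ) + 1 then (N : ℝ) + (i : ℕ) + 1
    else if (i : ℕ) = (j : ℕ) + 1 then
      -(((N : ℝ) + (j : ℕ) + 2) * ((j : ℕ) + 1 : ℝ) * ((ℓ : ℝ) - ((j : ℕ) + 1)))
    else 0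

/-- The value `A_N^ℓ(x,y) = det(y·I_ℓ + M_ℓ^{(N)}(x))`. -/
def APoly (N ℓ : ℕ) (x y : ℝ) : ℝ :=
  (y • (1 : Matrix (Fin ℓ) (Fin ℓ) ℝ) + Mmat N ℓ x).det


noncomputable section AuxConstraintAPoly

/-! ### Auxiliary definitions -/

def triGen (d b c : ℕ → ℝ) (m : ℕ) : Matrix (Fin m) (Fin m) ℝ :=
  Matrix.of fun i j =>
    if (i : ℕ) = (j : ℕ) then d i
    else if (j : ℕ) = (i : ℕ) + 1 then b i
    else if (i : ℕ) = (j : ℕ) + 1 then c j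
    else 0

def gg (N ℓ : ℕ) (j : ℕ) : ℝ := ((N : ℝ) + j) * ((j : ℝ) - (ℓ : ℝ))

def ww (ℓ : ℕ) (y : ℝ) (j : ℕ) : ℝ := y + (j : ℝ) * ((ℓ : ℝ) - (j : ℝ))

def WW (ℓ : ℕ) (y : ℝ) (k : ℕ) : ℝ := ∏ j ∈ Finset.range k, ww ℓ y j

def GG (N ℓ : ℕ) (a b : ℕ) : ℝ := ∏ j ∈ Finset.Ico a b, gg N ℓ j

def Ssum (N ℓ : ℕ) (y : ℝ) (m : ℕ) : ℝ :=
  ∑ k ∈ Finset.range (m + 1), (m.choose k : ℝ) * GG N ℓ (k + 1) (m + 1) * WW ℓ y k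

def dd (N ℓ : ℕ) (y : ℝ) (i : ℕ) : ℝ := y + ((N : ℝ) + i + 1) * (2 * (i : ℝ) + 1 - ℓ)
def bb (N : ℕ) (i : ℕ) : ℝ := (N : ℝ) + i + 1
def cc (N ℓ : ℕ) (j : ℕ) : ℝ := -(((N : ℝ) + j + 2) * ((j : ℝ) + 1) * ((ℓ : ℝ) - j - 1))

/-! ### Basic product lemmas -/

lemma GG_split (N ℓ : ℕ) {a b c : ℕ} (hab : a ≤ b) (hbc : b ≤ c) :
    GG N ℓ a c = GG N ℓ a b * GG N ℓ b c := by
  rw [GG, GG, GG, Finset.prod_Ico_consecutive _ hab hbc]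

lemma GG_single (N ℓ : ℕ) (a : ℕ) : GG N ℓ a (a + 1) = gg N ℓ a := by
  rw [GG, Finset.prod_Ico_succ_top le_rfl, Finset.Ico_self, Finset.prod_empty, one_mul]

lemma GG_empty (N ℓ : ℕ) {a b : ℕ} (h : b ≤ a) : GG N ℓ a b = 1 := by
  rw [GG, Finset.Ico_eq_empty (by omega), Finset.prod_empty]

lemma WW_succ (ℓ : ℕ) (y : ℝ) (k : ℕ) : WW ℓ y (k + 1) = WW ℓ y k * ww ℓ y k :=
  Finset.prod_range_succ _ _

/-! ### Determinant recurrence for tridiagonal matrices -/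

lemma triGen_submatrix (d b c : ℕ → ℝ) (m : ℕ) :
    (triGen d b c (m + 1)).submatrix Fin.castSucc Fin.castSucc = triGen d b c m := by
  ext i j
  simp [triGen, Matrix.submatrix_apply]

lemma det_triGen_succ_succ (d b c : ℕ → ℝ) (m : ℕ) :
    (triGen d b c (m + 2)).det =
      d (m + 1) * (triGen d b c (m + 1)).det - b m * c m * (triGen d b c m).det := by
  have hσtop : ((Fin.last m).castSucc).succAbove (Fin.last m) = Fin.last (m + 1) := by
    ext
    simp [Fin.succAbove, Fin.lt_def]
  have hσcast : ∀ j : Fin m,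
      ((Fin.last m).castSucc).succAbove j.castSucc = j.castSucc.castSucc := by
    intro j
    ext
    simp [Fin.succAbove, Fin.lt_def, j.isLt]
  rw [Matrix.det_succ_row (triGen d b c (m + 2)) (Fin.last (m + 1)), Fin.sum_univ_castSucc,
    Fin.sum_univ_castSucc]
  have hzero : ∀ j : Fin m,
      (-1 : ℝ) ^ ((Fin.last (m + 1) : ℕ) + ((j.castSucc.castSucc : Fin (m+2)) : ℕ)) *
          triGen d b c (m + 2) (Fin.last (m + 1)) j.castSucc.castSucc *
          ((triGen d b c (m + 2)).submatrix (Fin.last (m + 1)).succAbove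
            (j.castSucc.castSucc).succAbove).det = 0 := by
    intro j
    have hj : (j : ℕ) < m := j.isLt
    have : triGen d b c (m + 2) (Fin.last (m + 1)) j.castSucc.castSucc = 0 := by
      simp only [triGen, Matrix.of_apply, Fin.coe_castSucc, Fin.val_last]
      rw [if_neg (by omega), if_neg (by omega), if_neg (by omega)]
    rw [this]; ring
  rw [Finset.sum_eq_zero fun j _ => hzero j, zero_add]
  have hlastlast : triGen d b c (m + 2) (Fin.last (m + 1)) (Fin.last (m + 1)) = d (m + 1) := by
    simp [triGen]
  have hlastsub : triGen d b c (m + 2) (Fin.last (m + 1)) ((Fin.last m).castSucc) = c m := by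
    simp only [triGen, Matrix.of_apply, Fin.coe_castSucc, Fin.val_last]
    rw [if_neg (by omega), if_neg (by omega)]; simp
  rw [hlastlast, hlastsub, Fin.succAbove_last]
  set B : Matrix (Fin (m + 1)) (Fin (m + 1)) ℝ :=
    (triGen d b c (m + 2)).submatrix Fin.castSucc ((Fin.last m).castSucc).succAbove with hB
  have hBdet : B.det = b m * (triGen d b c m).det := by
    rw [Matrix.det_succ_column B (Fin.last m), Fin.sum_univ_castSucc]
    have hz : ∀ i : Fin m,
        (-1 : ℝ) ^ (((i.castSucc : Fin (m+1)) : ℕ) + ((Fin.last m : Fin (m+1)) : ℕ)) *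
            B i.castSucc (Fin.last m) *
            (B.submatrix (i.castSucc).succAbove (Fin.last m).succAbove).det = 0 := by
      intro i
      have hi : (i : ℕ) < m := i.isLt
      have : B i.castSucc (Fin.last m) = 0 := by
        rw [hB, Matrix.submatrix_apply, hσtop]
        simp only [triGen, Matrix.of_apply, Fin.coe_castSucc, Fin.val_last]
        rw [if_neg (by omega), if_neg (by omega), if_neg (by omega)]
      rw [this]; ring
    rw [Finset.sum_eq_zero fun i _ => hz i, zero_add]
    have hBll : B (Fin.last m) (Fin.last m) = b m := by
      rw [hB, Matrix.submatrix_apply, hσtop]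
      simp only [triGen, Matrix.of_apply, Fin.coe_castSucc, Fin.val_last]
      rw [if_neg (by omega)]; simp
    have hBsub : B.submatrix (Fin.last m).succAbove (Fin.last m).succAbove = triGen d b c m := by
      rw [Fin.succAbove_last]
      ext i j
      rw [Matrix.submatrix_apply, hB, Matrix.submatrix_apply, hσcast]
      simp [triGen]
    rw [hBll, hBsub, Fin.val_last]
    have : (-1 : ℝ) ^ (m + m) = 1 := by
      have : Even (m + m) := ⟨m, rfl⟩
      exact this.neg_one_pow
    rw [this]; ring
  rw [hBdet, triGen_submatrix]
  simp only [Fin.val_last, Fin.coe_castSucc]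
  have h1 : (-1 : ℝ) ^ (m + 1 + m) = -1 := by
    have : Odd (m + 1 + m) := ⟨m, by ring⟩
    exact this.neg_one_pow
  have h2 : (-1 : ℝ) ^ (m + 1 + (m + 1)) = 1 := by
    have : Even (m + 1 + (m + 1)) := ⟨m + 1, rfl⟩
    exact this.neg_one_pow
  rw [h1, h2]
  ring

/-! ### Recurrence for the closed-form sum -/

def Fterm (N ℓ : ℕ) (y : ℝ) (m K : ℕ) : ℝ :=
  ((m + 2).choose K : ℝ) * GG N ℓ (K + 1) (m + 3) * WW ℓ y K

def Rterm (N ℓ : ℕ) (y : ℝ) (m k : ℕ) : ℝ :=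
  ((m + 1).choose k : ℝ) * GG N ℓ (k + 1) (m + 2) * WW ℓ y (k + 1)

def Qterm (N ℓ : ℕ) (y : ℝ) (m K : ℕ) : ℝ :=
  ((K : ℝ) * ((K : ℝ) - ℓ) + ((N : ℝ) + m + 2) * (2 * (m : ℝ) + 3 - ℓ)) *
      ((m + 1).choose K : ℝ) * GG N ℓ (K + 1) (m + 2) * WW ℓ y K +
    ((N : ℝ) + m + 1) * ((N : ℝ) + m + 2) * ((m : ℝ) + 1) * ((ℓ : ℝ) - m - 1) *
      (m.choose K : ℝ) * GG N ℓ (K + 1) (m + 1) * WW ℓ y K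

lemma Qterm_top (N ℓ : ℕ) (y : ℝ) (m : ℕ) : Qterm N ℓ y m (m + 2) = 0 := by
  rw [Qterm, Nat.choose_eq_zero_of_lt (by omega), Nat.choose_eq_zero_of_lt (by omega)]
  push_cast; ring

lemma F0_eq_Q0 (N ℓ : ℕ) (y : ℝ) (m : ℕ) : Fterm N ℓ y m 0 = Qterm N ℓ y m 0 := by
  rw [Fterm, Qterm]
  rw [show GG N ℓ 1 (m + 3) = GG N ℓ 1 (m + 1) * gg N ℓ (m + 1) * gg N ℓ (m + 2) by
    rw [GG_split N ℓ (show 1 ≤ m + 2 by omega) (show m + 2 ≤ m + 3 by omega), GG_single,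
      GG_split N ℓ (show 1 ≤ m + 1 by omega) (show m + 1 ≤ m + 2 by omega), GG_single]]
  rw [show GG N ℓ 1 (m + 2) = GG N ℓ 1 (m + 1) * gg N ℓ (m + 1) by
    rw [GG_split N ℓ (show 1 ≤ m + 1 by omega) (show m + 1 ≤ m + 2 by omega), GG_single]]
  simp only [gg, Nat.choose_zero_right]
  push_cast
  ring

lemma key_step (N ℓ : ℕ) (y : ℝ) (m k : ℕ) (hk : k < m + 2) :
    Fterm N ℓ y m (k + 1) = Rterm N ℓ y m k + Qterm N ℓ y m (k + 1) := by
  rcases Nat.lt_or_ge k m with hkm | hge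
  · rw [Fterm, Rterm, Qterm]
    rw [show GG N ℓ (k + 2) (m + 3)
        = GG N ℓ (k + 2) (m + 1) * gg N ℓ (m + 1) * gg N ℓ (m + 2) by
      rw [GG_split N ℓ (show k + 2 ≤ m + 2 by omega) (show m + 2 ≤ m + 3 by omega), GG_single,
        GG_split N ℓ (show k + 2 ≤ m + 1 by omega) (show m + 1 ≤ m + 2 by omega), GG_single]]
    rw [show GG N ℓ (k + 1) (m + 2)
        = gg N ℓ (k + 1) * (GG N ℓ (k + 2) (m + 1) * gg N ℓ (m + 1)) by
      rw [GG_split N ℓ (show k + 1 ≤ k + 2 by omega) (show k + 2 ≤ m + 2 by omega), GG_single,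
        GG_split N ℓ (show k + 2 ≤ m + 1 by omega) (show m + 1 ≤ m + 2 by omega), GG_single]]
    rw [show GG N ℓ (k + 2) (m + 2) = GG N ℓ (k + 2) (m + 1) * gg N ℓ (m + 1) by
      rw [GG_split N ℓ (show k + 2 ≤ m + 1 by omega) (show m + 1 ≤ m + 2 by omega), GG_single]]
    have e1 : (((m + 2).choose (k + 1) : ℕ) : ℝ)
        = ((m + 1).choose k : ℝ) + ((m + 1).choose (k + 1) : ℝ) := by
      rw [show m + 2 = (m + 1) + 1 from rfl, Nat.choose_succ_succ (m + 1) k]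
      push_cast; ring
    have e3 : ((k : ℝ) + 1) * ((m + 1).choose (k + 1) : ℝ)
        = ((m : ℝ) + 1) * (m.choose k : ℝ) := by
      have h := Nat.add_one_mul_choose_eq m k
      have h' : ((m + 1) * m.choose k : ℕ) = ((m + 1).choose (k + 1) * (k + 1) : ℕ) := h
      have := congrArg (fun n : ℕ => (n : ℝ)) h'
      push_cast at this
      linarith [this]
    have e2 : ((m + 1).choose (k + 1) : ℝ) = (m.choose k : ℝ) + (m.choose (k + 1) : ℝ) := by
      rw [Nat.choose_succ_succ m k]; push_cast; ring
    have e4 : ((k : ℝ) + 1) * ((m + 1).choose (k + 1) : ℝ)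
        = ((m : ℝ) + 1 - (k : ℝ)) * ((m + 1).choose k : ℝ) := by
      have h := Nat.choose_succ_right_eq (m + 1) k
      have := congrArg (fun n : ℕ => (n : ℝ)) h
      push_cast at this
      rw [Nat.cast_sub (show k ≤ m + 1 by omega)] at this
      push_cast at this
      linarith [this]
    simp only [gg]
    push_cast
    linear_combination
      (GG N ℓ (k + 2) (m + 1) * (((N:ℝ) + m + 1) * ((m:ℝ) + 1 - ℓ)) *
        (((N:ℝ) + m + 2) * ((m:ℝ) + 2 - ℓ)) * WW ℓ y (k + 1)) * e1 +
      (GG N ℓ (k + 2) (m + 1) * (((N:ℝ) + m + 1) * ((m:ℝ) + 1 - ℓ)) * WW ℓ y (k + 1)) *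
        ((-(((N:ℝ) + m + 2) * ((m:ℝ) + 1))) * e2 + ((N:ℝ) + m + 2) * e3
          - ((N:ℝ) + (m:ℝ) + (k:ℝ) + 3 - (ℓ:ℝ)) * e4)
  · rcases (by omega : m = k ∨ k = m + 1) with h | h
    · subst h
      rw [Fterm, Rterm, Qterm]
      rw [show GG N ℓ (m + 2) (m + 3) = gg N ℓ (m + 2) from GG_single N ℓ (m + 2)]
      rw [show GG N ℓ (m + 1) (m + 2) = gg N ℓ (m + 1) from GG_single N ℓ (m + 1)]
      rw [GG_empty N ℓ (show m + 2 ≤ m + 2 by omega), GG_empty N ℓ (show m + 1 ≤ m + 2 by omega)]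
      rw [Nat.choose_succ_self_right, Nat.choose_succ_self_right, Nat.choose_self,
        Nat.choose_eq_zero_of_lt (by omega)]
      simp only [gg]
      push_cast
      ring
    · subst h
      rw [Fterm, Rterm, Qterm]
      simp only [show m + 1 + 1 = m + 2 from rfl, show m + 2 + 1 = m + 3 from rfl]
      rw [GG_empty N ℓ (show m + 3 ≤ m + 3 by omega), GG_empty N ℓ (show m + 2 ≤ m + 2 by omega),
        GG_empty N ℓ (show m + 2 ≤ m + 3 by omega), GG_empty N ℓ (show m + 1 ≤ m + 3 by omega)]
      rw [Nat.choose_self, Nat.choose_self, Nat.choose_eq_zero_of_lt (by omega),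
        Nat.choose_eq_zero_of_lt (by omega)]
      push_cast
      ring

lemma Ssum_rec (N ℓ : ℕ) (y : ℝ) (m : ℕ) :
    Ssum N ℓ y (m + 2) =
      (y + ((N : ℝ) + m + 2) * (2 * (m : ℝ) + 3 - ℓ)) * Ssum N ℓ y (m + 1) +
        ((N : ℝ) + m + 1) * ((N : ℝ) + m + 2) * ((m : ℝ) + 1) * ((ℓ : ℝ) - m - 1) *
          Ssum N ℓ y m := by
  have hyS : (y + ((N : ℝ) + m + 2) * (2 * (m : ℝ) + 3 - ℓ)) * Ssum N ℓ y (m + 1) +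
        ((N : ℝ) + m + 1) * ((N : ℝ) + m + 2) * ((m : ℝ) + 1) * ((ℓ : ℝ) - m - 1) *
          Ssum N ℓ y m
      = (∑ k ∈ Finset.range (m + 2), Rterm N ℓ y m k) +
          ∑ K ∈ Finset.range (m + 3), Qterm N ℓ y m K := by
    rw [Finset.sum_range_succ (Qterm N ℓ y m) (m + 2), Qterm_top, add_zero]
    have hSm' : Ssum N ℓ y m
        = ∑ k ∈ Finset.range (m + 2), (m.choose k : ℝ) * GG N ℓ (k + 1) (m + 1) * WW ℓ y k := by
      rw [Finset.sum_range_succ, Nat.choose_eq_zero_of_lt (by omega)]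
      rw [Ssum]; push_cast; ring
    rw [Ssum, hSm', Finset.mul_sum, Finset.mul_sum, ← Finset.sum_add_distrib,
      ← Finset.sum_add_distrib]
    refine Finset.sum_congr rfl fun k _ => ?_
    have hw : y * WW ℓ y k = WW ℓ y (k + 1) + (k : ℝ) * ((k : ℝ) - ℓ) * WW ℓ y k := by
      rw [WW_succ, ww]; ring
    rw [Rterm, Qterm]
    linear_combination (((m + 1).choose k : ℝ) * GG N ℓ (k + 1) (m + 2)) * hw
  rw [hyS]
  have hL : Ssum N ℓ y (m + 2) = ∑ K ∈ Finset.range (m + 3), Fterm N ℓ y m K := rfl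
  rw [hL, Finset.sum_range_succ' (Fterm N ℓ y m) (m + 2),
    Finset.sum_range_succ' (Qterm N ℓ y m) (m + 2), F0_eq_Q0]
  rw [Finset.sum_congr rfl fun k hk => key_step N ℓ y m k (Finset.mem_range.mp hk)]
  rw [Finset.sum_add_distrib]
  ring

/-! ### Determinant equals the sum -/

lemma Ssum_zero (N ℓ : ℕ) (y : ℝ) : Ssum N ℓ y 0 = 1 := by
  simp [Ssum, GG, WW]

lemma Ssum_one (N ℓ : ℕ) (y : ℝ) : Ssum N ℓ y 1 = dd N ℓ y 0 := by
  rw [Ssum, Finset.sum_range_succ, Finset.sum_range_one, GG_single, GG_empty N ℓ le_rfl]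
  simp [WW, Finset.prod_range_one, gg, ww, dd]
  ring

lemma det_eq_Ssum (N ℓ : ℕ) (y : ℝ) (m : ℕ) :
    (triGen (dd N ℓ y) (bb N) (cc N ℓ) m).det = Ssum N ℓ y m := by
  have key : ∀ n, (triGen (dd N ℓ y) (bb N) (cc N ℓ) n).det = Ssum N ℓ y n ∧
      (triGen (dd N ℓ y) (bb N) (cc N ℓ) (n + 1)).det = Ssum N ℓ y (n + 1) := by
    intro n
    induction n with
    | zero =>
      refine ⟨by rw [Matrix.det_fin_zero, Ssum_zero], ?_⟩
      rw [Matrix.det_fin_one, Ssum_one]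
      rfl
    | succ n ih =>
      refine ⟨ih.2, ?_⟩
      rw [det_triGen_succ_succ, ih.1, ih.2, Ssum_rec]
      rw [dd, bb, cc]
      push_cast
      ring
  exact (key m).1

/-! ### Identification with `APoly` and collapse at `m = ℓ` -/

lemma matrix_eq (N ℓ : ℕ) (y : ℝ) :
    y • (1 : Matrix (Fin ℓ) (Fin ℓ) ℝ) + Mmat N ℓ 0 = triGen (dd N ℓ y) (bb N) (cc N ℓ) ℓ := by
  ext i j
  simp only [Matrix.add_apply, Matrix.smul_apply, Matrix.one_apply, Mmat, triGen,
    Matrix.of_apply, smul_eq_mul, mul_ite, mul_one, mul_zero, Fin.ext_iff]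
  by_cases h : (i : ℕ) = (j : ℕ)
  · rw [if_pos h, if_pos h, if_pos h, dd]
    ring
  · rw [if_neg h, if_neg h, if_neg h, zero_add]
    by_cases h2 : (j : ℕ) = (i : ℕ) + 1
    · rw [if_pos h2, if_pos h2, bb]
    · rw [if_neg h2, if_neg h2]
      by_cases h3 : (i : ℕ) = (j : ℕ) + 1
      · rw [if_pos h3, if_pos h3, cc]
        ring
      · rw [if_neg h3, if_neg h3]

lemma Ssum_collapse (N ℓ : ℕ) (y : ℝ) : Ssum N ℓ y ℓ = WW ℓ y ℓ := by
  rw [Ssum, Finset.sum_range_succ, Nat.choose_self, GG_empty N ℓ le_rfl]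
  rw [Finset.sum_eq_zero, zero_add]
  · simp
  · intro k hk
    have hk' : k < ℓ := Finset.mem_range.mp hk
    rw [GG_split N ℓ (show k + 1 ≤ ℓ by omega) (show ℓ ≤ ℓ + 1 by omega), GG_single, gg]
    simp

lemma WW_eq_prod (ℓ : ℕ) (y : ℝ) :
    WW ℓ y ℓ = ∏ i ∈ Finset.range ℓ, (y - ((i : ℝ) + 1) * (((i : ℝ) + 1) - (ℓ : ℝ))) := by
  cases ℓ with
  | zero => simp [WW]
  | succ t =>
    rw [WW, Finset.prod_range_succ', Finset.prod_range_succ]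
    have h0 : ww (t + 1) y 0 = y := by rw [ww]; push_cast; ring
    have ht : y - ((t : ℝ) + 1) * (((t : ℝ) + 1) - ((t + 1 : ℕ) : ℝ)) = y := by
      push_cast; ring
    rw [h0, ht]
    congr 1
    refine Finset.prod_congr rfl fun i _ => ?_
    rw [ww]; push_cast; ring

/-! ### Part (a) -/

lemma constraintPoly_zero_x (N : ℕ) (ε y : ℝ) (n : ℕ) :
    constraintPoly N ε 0 y n =
      ∏ i ∈ Finset.range n, (y - ((i : ℝ) + 1) * (((i : ℝ) + 1) + 2 * ε)) := by
  have key : ∀ k, constraintPoly N ε 0 y k =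
        (∏ i ∈ Finset.range k, (y - ((i : ℝ) + 1) * (((i : ℝ) + 1) + 2 * ε))) ∧
      constraintPoly N ε 0 y (k + 1) =
        ∏ i ∈ Finset.range (k + 1), (y - ((i : ℝ) + 1) * (((i : ℝ) + 1) + 2 * ε)) := by
    intro k
    induction k with
    | zero =>
      refine ⟨by simp [constraintPoly], ?_⟩
      rw [constraintPoly, Finset.prod_range_one]
      ring
    | succ n ih =>
      refine ⟨ih.2, ?_⟩
      rw [constraintPoly, ih.1, ih.2, Finset.prod_range_succ _ (n + 1),
        Finset.prod_range_succ _ n]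
      push_cast
      ring
  exact (key n).1

end AuxConstraintAPoly

/-- (a) `P_N^{(N,ε)}(0,y) = ∏_{i=1}^N (y - i(i+2ε))`;
(b) `A_N^ℓ(0,y) = ∏_{i=1}^ℓ (y - i(i-ℓ)) = ∏_{i=1}^ℓ (y + i(ℓ-i))`. -/
theorem constraintPoly_APoly_at_x_zero (N ℓ : ℕ) (ε y : ℝ) :
    constraintPoly N ε 0 y N =
        (∏ i ∈ Finset.range N, (y - ((i : ℝ) + 1) * (((i : ℝ) + 1) + 2 * ε))) ∧
      APoly N ℓ 0 y =
        (∏ i ∈ Finset.range ℓ, (y - ((i : ℝ) + 1) * (((i : ℝ) + 1) - (ℓ : ℝ)))) ∧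
      APoly N ℓ 0 y =
        (∏ i ∈ Finset.range ℓ, (y + ((i : ℝ) + 1) * ((ℓ : ℝ) - ((i : ℝ) + 1)))) := by
  refine ⟨constraintPoly_zero_x N ε y N, ?_, ?_⟩
  · rw [APoly, matrix_eq, det_eq_Ssum, Ssum_collapse, WW_eq_prod]
  · rw [APoly, matrix_eq, det_eq_Ssum, Ssum_collapse, WW_eq_prod]
    refine Finset.prod_congr rfl fun i _ => by ring
end

section
/- Fix an integer N ≥ 0 and real numbers x, y, ε. Let z ∈ ℝ⟦t⟧ be the formal power series z = Σ_{k≥0} ( P_k^{(N,ε)}(x,y) / (k!·(k+1)!) ) t^k. Then, with z′ and z″ denoting the first and second formal derivatives of z with respect to t, the formal power series identity t(1+t)·z″ + (2 − (x − 3 − 2ε)t − x t²)·z′ − ( (x + y − 1 − 2ε) − (N−1)x·t )·z = 0 holds in ℝ⟦t⟧. -/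
open PowerSeries

/-- The generating function `z = Σ_{k≥0} (P_k^{(N,ε)}(x,y)/(k!(k+1)!)) t^k ∈ ℝ⟦t⟧`. -/
noncomputable def genFun (N : ℕ) (ε x y : ℝ) : PowerSeries ℝ :=
  PowerSeries.mk fun k =>
    constraintPoly N ε x y k / ((k.factorial : ℝ) * ((k + 1).factorial : ℝ))

/-!
Comparing coefficients of `t^(n+1)` and multiplying by `(n+1)! (n+2)!`, the differential
equation for `z` becomes exactly the three-term recurrence expressing `P_{n+2}` through
`P_{n+1}` and `P_n`; the constant coefficient is the initial value `P_1 = x + y - 1 - 2ε`.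
-/

namespace PowerSeries

variable {R : Type*} [CommSemiring R]

theorem coeff_X_mul_derivative (f : R⟦X⟧) (n : ℕ) :
    coeff n (X * d⁄dX R f) = n * coeff n f := by
  rcases n with _ | n
  · simp
  · rw [coeff_succ_X_mul, coeff_derivative, mul_comm, Nat.cast_succ]

end PowerSeries

section HeunOperator

variable (N : ℕ) (ε x y : ℝ)

noncomputable def heunOperator (f : ℝ⟦X⟧) : ℝ⟦X⟧ :=
  X * (1 + X) * d⁄dX ℝ (d⁄dX ℝ f) +
      (C 2 - C (x - 3 - 2 * ε) * X - C x * X ^ 2) * d⁄dX ℝ f -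
    (C (x + y - 1 - 2 * ε) - C (((N : ℝ) - 1) * x) * X) * f

theorem coeff_zero_heunOperator (f : ℝ⟦X⟧) :
    coeff 0 (heunOperator N ε x y f) = 2 * coeff 1 f - (x + y - 1 - 2 * ε) * coeff 0 f := by
  have hd : constantCoeff (d⁄dX ℝ f) = coeff 1 f := by
    simpa using coeff_derivative f 0
  simp [heunOperator, mul_add, add_mul, sub_mul, mul_assoc, hd]

theorem coeff_succ_heunOperator (f : ℝ⟦X⟧) (n : ℕ) :
    coeff (n + 1) (heunOperator N ε x y f) =
      (n + 2) * (n + 3) * coeff (n + 2) f -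
        ((n + 2) * x + y - (n + 2) * (n + 2 + 2 * ε)) * coeff (n + 1) f +
        (N - (n + 1)) * x * coeff n f := by
  have hexpand : heunOperator N ε x y f =
      X * d⁄dX ℝ (d⁄dX ℝ f) + X * (X * d⁄dX ℝ (d⁄dX ℝ f)) + C 2 * d⁄dX ℝ f -
        C (x - 3 - 2 * ε) * (X * d⁄dX ℝ f) - C x * (X * (X * d⁄dX ℝ f)) -
        C (x + y - 1 - 2 * ε) * f + C (((N : ℝ) - 1) * x) * (X * f) := by
    rw [heunOperator]
    ring
  simp only [hexpand, map_add (coeff (n + 1)), map_sub (coeff (n + 1)), coeff_C_mul, coeff_succ_X_mul,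
    coeff_X_mul_derivative, coeff_derivative]
  push_cast
  ring

theorem coeff_succ_heunOperator_genFun (n : ℕ) :
    coeff (n + 1) (heunOperator N ε x y (genFun N ε x y)) =
      (constraintPoly N ε x y (n + 2) -
          (((n + 2) * x + y - (n + 2) * (n + 2 + 2 * ε)) * constraintPoly N ε x y (n + 1) -
            (n + 2) * (n + 1) * (N - (n + 1)) * x * constraintPoly N ε x y n)) /
        ((n + 1).factorial * (n + 2).factorial) := by
  rw [coeff_succ_heunOperator]
  simp only [genFun, coeff_mk]
  push_cast [Nat.factorial_succ]
  field_simp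
  ring

end HeunOperator

/-- the generating function `z` of the normalized constraint polynomials
satisfies the confluent Heun differential equation
`t(1+t) z'' + (2 - (x-3-2ε)t - x t²) z' - ((x+y-1-2ε) - (N-1)x t) z = 0` in `ℝ⟦t⟧`. -/
theorem genFun_heun_ode (N : ℕ) (ε x y : ℝ) :
    PowerSeries.X * (1 + PowerSeries.X) *
        (genFun N ε x y).derivativeFun.derivativeFun +
      (C (R := ℝ) 2 - C (R := ℝ) (x - 3 - 2 * ε) * PowerSeries.X - C (R := ℝ) x * PowerSeries.X ^ 2) *
        (genFun N ε x y).derivativeFun -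
      (C (R := ℝ) (x + y - 1 - 2 * ε) - C (R := ℝ) (((N : ℝ) - 1) * x) * PowerSeries.X) *
        genFun N ε x y = 0 := by
  change heunOperator N ε x y (genFun N ε x y) = 0
  ext n
  rcases n with _ | n
  · rw [coeff_zero_heunOperator]
    simp [genFun, constraintPoly]
    ring
  · rw [coeff_succ_heunOperator_genFun, constraintPoly, sub_self, zero_div, map_zero]
end

section
/- Fix integers N ≥ 0 and ℓ ≥ 0 and real numbers x, y. In the formal power series ring ℝ⟦t⟧, the identity Σ_{k≥0} ( P_k^{(N+ℓ, −ℓ/2)}(x,y) / (k!·(k+1)!) ) t^k = (1 + t)^ℓ · Σ_{k≥0} ( P_k^{(N, ℓ/2)}(x,y) / (k!·(k+1)!) ) t^k holds. -/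
open Finset PowerSeries

section BinomialConv

variable {R : Type*}

theorem sum_range_choose_mul_shift_eq_zero [CommRing R] (ℓ : ℕ) (u : ℕ → R) :
    ∑ j ∈ range (ℓ + 1), (ℓ.choose j : R) * ((j : R) * u j - ((ℓ : R) - j) * u (j + 1)) = 0 := by
  have hterm : ∀ j ∈ range (ℓ + 1), (ℓ.choose j : R) * ((j : R) * u j - ((ℓ : R) - j) * u (j + 1))
      = (ℓ.choose j : R) * j * u j - (ℓ.choose (j + 1) : R) * ↑(j + 1) * u (j + 1) := by
    intro j hj
    have h := congrArg (Nat.cast : ℕ → R) (Nat.choose_succ_right_eq ℓ j)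
    push_cast [Nat.cast_sub (Nat.lt_succ_iff.mp (mem_range.mp hj))] at h ⊢
    linear_combination u (j + 1) * h
  rw [sum_congr rfl hterm, sum_range_sub' (fun j => (ℓ.choose j : R) * j * u j)]
  simp

def binomialConv [Semiring R] (ℓ : ℕ) (b : ℤ → R) (n : ℤ) : R :=
  ∑ j ∈ range (ℓ + 1), (ℓ.choose j : R) * b (n - j)

theorem coeff_one_add_X_pow_mul [CommSemiring R] (ℓ k : ℕ) (b : ℤ → R)
    (hb : ∀ n < 0, b n = 0) :
    coeff k (((1 : R⟦X⟧) + X) ^ ℓ * PowerSeries.mk fun i : ℕ => b i) = binomialConv ℓ b k := by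
  rw [add_comm, add_pow, sum_mul, map_sum, binomialConv]
  refine sum_congr rfl fun j _ => ?_
  rw [one_pow, mul_one, ← map_natCast (C (R := R)), mul_right_comm, mul_comm, coeff_C_mul,
    coeff_X_pow_mul']
  split_ifs with hjk
  · rw [coeff_mk, Nat.cast_sub hjk]
  · rw [hb _ (by omega), mul_zero]

end BinomialConv

namespace ConstraintPoly

/-- Indexing by `ℤ`, with zeros at negative indices, lets the recurrence of `IsConstraintSeq`
hold at every index, with no special cases at `k = 0, 1`. -/
noncomputable def normalizedSeq (M : ℕ) (ε x y : ℝ) (n : ℤ) : ℝ :=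
  if 0 ≤ n then
    constraintPoly M ε x y n.toNat / ((n.toNat.factorial : ℝ) * ((n.toNat + 1).factorial : ℝ))
  else 0

variable (M : ℕ) (ε x y : ℝ)

theorem normalizedSeq_of_neg {n : ℤ} (hn : n < 0) : normalizedSeq M ε x y n = 0 :=
  if_neg hn.not_ge

theorem normalizedSeq_natCast (k : ℕ) :
    normalizedSeq M ε x y k =
      constraintPoly M ε x y k / ((k.factorial : ℝ) * ((k + 1).factorial : ℝ)) := by
  simp [normalizedSeq]

theorem normalizedSeq_add_two (k : ℕ) :
    ((k : ℝ) + 2) * (k + 3) * normalizedSeq M ε x y (k + 2) =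
      ((k + 2) * x + y - (k + 2) * (k + 2 + 2 * ε)) * normalizedSeq M ε x y (k + 1) -
        (M - k - 1) * x * normalizedSeq M ε x y k := by
  have hk1 : ((k + 1 : ℕ) : ℤ) = (k : ℤ) + 1 := by push_cast; rfl
  have hk2 : ((k + 2 : ℕ) : ℤ) = (k : ℤ) + 2 := by push_cast; rfl
  rw [← hk1, ← hk2, normalizedSeq_natCast, normalizedSeq_natCast, normalizedSeq_natCast,
    constraintPoly]
  simp only [Nat.factorial_succ, Nat.cast_mul, Nat.cast_add, Nat.cast_one, Nat.cast_ofNat]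
  have : (k.factorial : ℝ) ≠ 0 := by positivity
  field_simp
  ring

structure IsConstraintSeq (M : ℕ) (ε x y : ℝ) (a : ℤ → ℝ) : Prop where
  apply_of_neg : ∀ n < 0, a n = 0
  apply_zero : a 0 = 1
  recurrence : ∀ n : ℤ, (n : ℝ) * (n + 1) * a n =
    (n * x + y - n * (n + 2 * ε)) * a (n - 1) - (M - n + 1) * x * a (n - 2)

theorem isConstraintSeq_normalizedSeq : IsConstraintSeq M ε x y (normalizedSeq M ε x y) := by
  refine ⟨fun n => normalizedSeq_of_neg M ε x y, ?_, fun n => ?_⟩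
  · simpa [constraintPoly] using normalizedSeq_natCast M ε x y 0
  obtain hn | ⟨k, rfl⟩ := lt_or_ge n 0 |>.imp_right Int.eq_ofNat_of_zero_le
  · simp [normalizedSeq_of_neg, hn, show n - 1 < 0 by omega, show n - 2 < 0 by omega]
  match k with
  | 0 => simp [normalizedSeq_of_neg]
  | 1 =>
    have h0 := normalizedSeq_natCast M ε x y 0
    have h1 := normalizedSeq_natCast M ε x y 1
    norm_num [constraintPoly] at h0 h1
    norm_num [normalizedSeq_of_neg, h0, h1]
    ring
  | k + 2 =>
    have h := normalizedSeq_add_two M ε x y k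
    push_cast at h ⊢
    rw [show (k : ℤ) + 2 - 1 = k + 1 by ring, show (k : ℤ) + 2 - 2 = k by ring]
    linear_combination h

namespace IsConstraintSeq

variable {M ε x y}

theorem unique {a b : ℤ → ℝ} (ha : IsConstraintSeq M ε x y a) (hb : IsConstraintSeq M ε x y b) :
    a = b := by
  suffices h : ∀ k : ℕ, ∀ n : ℤ, n < k → a n = b n from
    funext fun n => h (n.toNat + 1) n (by omega)
  intro k
  induction k with
  | zero => exact fun n hn => (ha.apply_of_neg n hn).trans (hb.apply_of_neg n hn).symm
  | succ k ih =>
    intro n hn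
    obtain hlt | rfl := lt_or_eq_of_le (show n ≤ k by omega)
    · exact ih n hlt
    obtain rfl | hk := k.eq_zero_or_pos
    · exact ha.apply_zero.trans hb.apply_zero.symm
    have hne : ((k : ℤ) : ℝ) * ((k : ℤ) + 1) ≠ 0 := by positivity
    apply mul_left_cancel₀ hne
    rw [ha.recurrence, hb.recurrence, ih _ (by omega), ih _ (by omega)]

theorem binomialConv {b : ℤ → ℝ} (ℓ : ℕ) (hb : IsConstraintSeq M ((ℓ : ℝ) / 2) x y b) :
    IsConstraintSeq (M + ℓ) (-(ℓ : ℝ) / 2) x y (binomialConv ℓ b) := by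
  refine ⟨fun n hn => sum_eq_zero fun j _ => by rw [hb.apply_of_neg _ (by omega), mul_zero],
    ?_, fun n => ?_⟩
  · rw [_root_.binomialConv, sum_range_succ',
      sum_eq_zero fun j _ => by rw [hb.apply_of_neg _ (by omega), mul_zero]]
    simp [hb.apply_zero]
  obtain ⟨w, hw⟩ : ∃ w : ℕ → ℝ, ∀ j : ℕ, b (n - j) = w j := ⟨_, fun _ => rfl⟩
  have hw1 (j : ℕ) : b (n - 1 - j) = w (j + 1) := by rw [← hw]; congr 1; push_cast; ring
  have hw2 (j : ℕ) : b (n - 2 - j) = w (j + 2) := by rw [← hw]; congr 1; push_cast; ring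
  have hrec (j : ℕ) : ((n : ℝ) - j) * (n - j + 1) * w j =
      ((n - j) * x + y - (n - j) * (n - j + ℓ)) * w (j + 1) -
        (M - (n - j) + 1) * x * w (j + 2) := by
    have h := hb.recurrence (n - j)
    rw [hw, show n - j - 1 = n - 1 - j by ring, show n - j - 2 = n - 2 - j by ring, hw1, hw2] at h
    push_cast at h
    linear_combination h
  -- The two summed recurrences differ by `hu`'s sum minus `hv`'s sum, summand by summand.
  have hu := sum_range_choose_mul_shift_eq_zero ℓ fun j => (2 * n + 1 - j : ℝ) * w j
  have hv := sum_range_choose_mul_shift_eq_zero ℓ fun j => x * w (j + 1)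
  simp only [_root_.binomialConv, hw, hw1, hw2, mul_sum]
  rw [← sub_eq_zero, ← sum_sub_distrib, ← sum_sub_distrib]
  refine Eq.trans ?_ ((congrArg₂ HSub.hSub hu hv).trans (sub_zero 0))
  rw [← sum_sub_distrib]
  refine sum_congr rfl fun j _ => ?_
  push_cast
  linear_combination (ℓ.choose j : ℝ) * hrec j

end IsConstraintSeq

end ConstraintPoly

/-- in `ℝ⟦t⟧`,
`Σ_k (P_k^{(N+ℓ,-ℓ/2)}(x,y)/(k!(k+1)!)) t^k = (1+t)^ℓ · Σ_k (P_k^{(N,ℓ/2)}(x,y)/(k!(k+1)!)) t^k`. -/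
theorem genFun_shift_identity (N ℓ : ℕ) (x y : ℝ) :
    (PowerSeries.mk fun k =>
        constraintPoly (N + ℓ) (-(ℓ : ℝ) / 2) x y k /
          ((k.factorial : ℝ) * ((k + 1).factorial : ℝ))) =
      (1 + PowerSeries.X) ^ ℓ *
        PowerSeries.mk fun k =>
          constraintPoly N ((ℓ : ℝ) / 2) x y k /
            ((k.factorial : ℝ) * ((k + 1).factorial : ℝ)) := by
  open ConstraintPoly in
  have hseq : normalizedSeq (N + ℓ) (-(ℓ : ℝ) / 2) x y =
      binomialConv ℓ (normalizedSeq N (ℓ / 2) x y) :=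
    (isConstraintSeq_normalizedSeq _ _ _ _).unique
      ((isConstraintSeq_normalizedSeq _ _ _ _).binomialConv ℓ)
  simp only [← ConstraintPoly.normalizedSeq_natCast]
  ext k
  rw [coeff_one_add_X_pow_mul _ _ _ fun n => ConstraintPoly.normalizedSeq_of_neg N _ x y,
    coeff_mk, hseq]
end
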